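/- For every j ∈ {1,...,m−1} and ε ∈ (0,1], defining R^ε_j = (Id + ε(T_j − Id)) ∘ ... ∘ (Id + ε(T_1 − Id)) and E^ε_j = (1/ε²)(R^ε_j − Id) + (1/ε)∑_{i=1}^j (Id − T_i), one has for all x ∈ D: ‖E^ε_{j+1} x‖ ≤ (1 + 2ε)‖E^ε_j x‖ + 4j(‖x − z‖ + ρ), where z ∈ D is fixed and ρ = max_i ‖T_i z − z‖ / 2. -/
import Mathlib


open Filter Topology Metric

/-- The under-relaxed partial composition
`(Id + ε(T j − Id)) ∘ ⋯ ∘ (Id + ε(T 1 − Id))`, applying `T 1` first. -/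
noncomputable def relaxComp {H : Type*} [NormedAddCommGroup H] [Module ℝ H]
    (j : ℕ) (T : ℕ → H → H) (ε : ℝ) (x : H) : H :=
  (List.range j).foldl (fun y i => y + ε • (T (i + 1) y - y)) x

/-- The error operator `E^ε_j = (1/ε²)(R^ε_j − Id) + (1/ε)∑_{i=1}^j (Id − T_i)`. -/
noncomputable def errOp {H : Type*} [NormedAddCommGroup H] [Module ℝ H]
    (T : ℕ → H → H) (ε : ℝ) (j : ℕ) (x : H) : H :=
  (1 / ε ^ 2) • (relaxComp j T ε x - x)
    + (1 / ε) • ∑ i ∈ Finset.Icc 1 j, (x - T i x)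

lemma relaxComp_succ {H : Type*} [NormedAddCommGroup H] [Module ℝ H]
    (j : ℕ) (T : ℕ → H → H) (ε : ℝ) (x : H) :
    relaxComp (j + 1) T ε x = relaxComp j T ε x
      + ε • (T (j + 1) (relaxComp j T ε x) - relaxComp j T ε x) := by
  simp [relaxComp, List.range_succ]

theorem stmt3 {H : Type*} [NormedAddCommGroup H] [InnerProductSpace ℝ H] [CompleteSpace H]
    (D : Set H) (hD : D.Nonempty) (hDc : IsClosed D) (hDconv : Convex ℝ D)
    (m : ℕ) (hm : 2 ≤ m) (T : ℕ → H → H)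
    (hmap : ∀ i ∈ Finset.Icc 1 m, Set.MapsTo (T i) D D)
    (hne : ∀ i ∈ Finset.Icc 1 m, ∀ x ∈ D, ∀ y ∈ D, ‖T i x - T i y‖ ≤ ‖x - y‖)
    (z : H) (hz : z ∈ D) (ρ : ℝ)
    (hρ : ρ = ((Finset.Icc 1 m).sup' (Finset.nonempty_Icc.2 (by omega))
      fun i => ‖T i z - z‖) / 2) :
    ∀ j, 1 ≤ j → j ≤ m - 1 → ∀ ε ∈ Set.Ioc (0:ℝ) 1, ∀ x ∈ D,
      ‖errOp T ε (j + 1) x‖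
        ≤ (1 + 2 * ε) * ‖errOp T ε j x‖ + 4 * j * (‖x - z‖ + ρ) := by
  intro j hj1 hjm ε hε x hx
  obtain ⟨hε0, hε1⟩ := hε
  have hεne : ε ≠ 0 := ne_of_gt hε0
  -- membership of partial compositions in D
  have hmem : ∀ k, k ≤ m → relaxComp k T ε x ∈ D := by
    intro k hk
    induction k with
    | zero => simpa [relaxComp] using hx
    | succ n ih =>
      have hn : relaxComp n T ε x ∈ D := ih (by omega)
      have hT : T (n + 1) (relaxComp n T ε x) ∈ D :=
        hmap (n + 1) (by simp [Finset.mem_Icc]; omega) hn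
      rw [relaxComp_succ]
      have heq : relaxComp n T ε x + ε • (T (n + 1) (relaxComp n T ε x) - relaxComp n T ε x)
          = (1 - ε) • relaxComp n T ε x + ε • T (n + 1) (relaxComp n T ε x) := by
        module
      rw [heq]
      exact hDconv hn hT (by linarith) (le_of_lt hε0) (by ring)
  set R := relaxComp j T ε x with hRdef
  have hR : R ∈ D := hmem j (by omega)
  set S := ∑ i ∈ Finset.Icc 1 j, (x - T i x) with hSdef
  -- key identity
  have key : errOp T ε (j + 1) x
      = errOp T ε j x + (1 / ε) • (T (j + 1) R - T (j + 1) x) - (1 / ε) • (R - x) := by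
    simp only [errOp, relaxComp_succ, Finset.sum_Icc_succ_top (Nat.le_add_left 1 j), ← hRdef,
      ← hSdef]
    match_scalars <;> (field_simp; try ring)
  -- R - x in terms of errOp
  have hRx : R - x = ε ^ 2 • errOp T ε j x - ε • S := by
    simp only [errOp, ← hRdef, ← hSdef]
    match_scalars <;> (field_simp; try ring)
  -- bound on each ‖x - T i x‖
  have hterm : ∀ i ∈ Finset.Icc 1 j, ‖x - T i x‖ ≤ 2 * ‖x - z‖ + 2 * ρ := by
    intro i hi
    rw [Finset.mem_Icc] at hi
    have him : i ∈ Finset.Icc 1 m := Finset.mem_Icc.2 ⟨hi.1, by omega⟩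
    have h1 : ‖T i z - T i x‖ ≤ ‖z - x‖ := hne i him z hz x hx
    have h2 : ‖T i z - z‖ ≤ 2 * ρ := by
      rw [hρ]
      have := Finset.le_sup' (fun i => ‖T i z - z‖) him
      linarith
    calc ‖x - T i x‖ = ‖(x - z) + (z - T i z) + (T i z - T i x)‖ := by congr 1; abel
      _ ≤ ‖(x - z) + (z - T i z)‖ + ‖T i z - T i x‖ := norm_add_le _ _
      _ ≤ ‖x - z‖ + ‖z - T i z‖ + ‖T i z - T i x‖ := by
          have := norm_add_le (x - z) (z - T i z); linarith
      _ ≤ 2 * ‖x - z‖ + 2 * ρ := by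
          rw [norm_sub_rev (z)]
          rw [norm_sub_rev z x] at h1
          linarith
  have hS : ‖S‖ ≤ j * (2 * ‖x - z‖ + 2 * ρ) := by
    calc ‖S‖ ≤ ∑ i ∈ Finset.Icc 1 j, ‖x - T i x‖ := norm_sum_le _ _
      _ ≤ ∑ i ∈ Finset.Icc 1 j, (2 * ‖x - z‖ + 2 * ρ) := Finset.sum_le_sum hterm
      _ = j * (2 * ‖x - z‖ + 2 * ρ) := by
          rw [Finset.sum_const, Nat.card_Icc]; simp; ring
  have hRxnorm : ‖R - x‖ ≤ ε ^ 2 * ‖errOp T ε j x‖ + ε * ‖S‖ := by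
    rw [hRx]
    calc ‖ε ^ 2 • errOp T ε j x - ε • S‖
        ≤ ‖ε ^ 2 • errOp T ε j x‖ + ‖ε • S‖ := norm_sub_le _ _
      _ = ε ^ 2 * ‖errOp T ε j x‖ + ε * ‖S‖ := by
          rw [norm_smul, norm_smul, Real.norm_eq_abs, Real.norm_eq_abs,
            abs_of_pos (by positivity), abs_of_pos hε0]
  have hTRx : ‖T (j + 1) R - T (j + 1) x‖ ≤ ‖R - x‖ :=
    hne (j + 1) (Finset.mem_Icc.2 ⟨by omega, by omega⟩) R hR x hx
  have hfinal : ‖errOp T ε (j + 1) x‖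
      ≤ ‖errOp T ε j x‖ + (2 / ε) * ‖R - x‖ := by
    rw [key]
    calc ‖errOp T ε j x + (1 / ε) • (T (j + 1) R - T (j + 1) x) - (1 / ε) • (R - x)‖
        ≤ ‖errOp T ε j x + (1 / ε) • (T (j + 1) R - T (j + 1) x)‖ + ‖(1 / ε) • (R - x)‖ :=
          norm_sub_le _ _
      _ ≤ ‖errOp T ε j x‖ + ‖(1 / ε) • (T (j + 1) R - T (j + 1) x)‖ + ‖(1 / ε) • (R - x)‖ := by
          have := norm_add_le (errOp T ε j x) ((1 / ε) • (T (j + 1) R - T (j + 1) x))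
          linarith
      _ ≤ ‖errOp T ε j x‖ + (2 / ε) * ‖R - x‖ := by
          rw [norm_smul, norm_smul, Real.norm_eq_abs, abs_of_pos (by positivity)]
          have h1ε : (0:ℝ) < 1 / ε := by positivity
          have ha := mul_le_mul_of_nonneg_left hTRx (le_of_lt h1ε)
          have hb : (2 / ε) * ‖R - x‖ = 1 / ε * ‖R - x‖ + 1 / ε * ‖R - x‖ := by ring
          linarith
  have h2ε : (2 / ε) * ‖R - x‖ ≤ 2 * ε * ‖errOp T ε j x‖ + 2 * ‖S‖ := by
    have := hRxnorm
    have h : (2 / ε) * (ε ^ 2 * ‖errOp T ε j x‖ + ε * ‖S‖)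
        = 2 * ε * ‖errOp T ε j x‖ + 2 * ‖S‖ := by field_simp
    have h2 : (2 / ε) * ‖R - x‖ ≤ (2 / ε) * (ε ^ 2 * ‖errOp T ε j x‖ + ε * ‖S‖) := by
      apply mul_le_mul_of_nonneg_left this (by positivity)
    linarith
  calc ‖errOp T ε (j + 1) x‖ ≤ ‖errOp T ε j x‖ + (2 / ε) * ‖R - x‖ := hfinal
    _ ≤ ‖errOp T ε j x‖ + (2 * ε * ‖errOp T ε j x‖ + 2 * ‖S‖) := by linarith
    _ ≤ (1 + 2 * ε) * ‖errOp T ε j x‖ + 4 * j * (‖x - z‖ + ρ) := by nlinarith [hS]
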